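/- Let X be an SI₂-quasicontinuous T₀ space. A subset U of X is weakly irreducibly open if and only if for each x ∈ U there exists a nonempty finite set F with F ≪_r x and ↑F ⊆ U. -/

import Mathlib

open Set

variable {X : Type*} [TopologicalSpace X]

/-- Specialization order: `sle x y` iff `x ∈ closure {y}`. -/
def sle (x y : X) : Prop := x ∈ closure ({y} : Set X)

/-- Upper bounds w.r.t. the specialization order. -/
def ub (A : Set X) : Set X := {x | ∀ a ∈ A, sle a x}

/-- Lower bounds w.r.t. the specialization order. -/
def lb (A : Set X) : Set X := {x | ∀ a ∈ A, sle x a}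

/-- The cut `A^δ = (A^↑)^↓`. -/
def cut (A : Set X) : Set X := lb (ub A)

/-- Upper closure `↑A` w.r.t. the specialization order. -/
def up (A : Set X) : Set X := {x | ∃ a ∈ A, sle a x}

/-- Irreducible subsets of a topological space. -/
def Irred (F : Set X) : Prop :=
  F.Nonempty ∧ ∀ B C : Set X, IsClosed B → IsClosed C → F ⊆ B ∪ C → F ⊆ B ∨ F ⊆ C

/-- `wayBelow A B` is the relation `A ≪_r B`. -/
def wayBelow (A B : Set X) : Prop :=
  ∀ E : Set X, Irred E → (B ∩ cut E).Nonempty → (up A ∩ E).Nonempty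

/-- Weakly irreducibly open sets (the topology `τ_{SI₂}(X)`). -/
def WIOpen (U : Set X) : Prop :=
  IsOpen U ∧ ∀ F : Set X, Irred F → (cut F ∩ U).Nonempty → (F ∩ U).Nonempty

/-- `w x` is the family of finite nonempty sets way below `x`. -/
def wfam (x : X) : Set (Set X) := {F : Set X | F.Finite ∧ F.Nonempty ∧ wayBelow F {x}}

/-- `SI₂`-quasicontinuous spaces. -/
def SI2Quasicontinuous (X : Type*) [TopologicalSpace X] : Prop :=
  ∀ x : X,
    ((wfam x).Nonempty ∧ DirectedOn (fun A B : Set X => B ⊆ up A) (wfam x)) ∧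
    (up {x} = ⋂ F ∈ wfam x, up F) ∧
    (∀ H : Set X, H.Finite → H.Nonempty → IsOpen {y : X | wayBelow H {y}})

/-- `F` is a quasi-eventual lower bound of the net `xj`. -/
def QELB {J : Type*} [Preorder J] (xj : J → X) (F : Set X) : Prop :=
  ∃ k : J, ∀ j, k ≤ j → xj j ∈ up F

/-- `x` is a `𝒢𝒟`-limit of the net `xj`. -/
def GDLimit {J : Type*} [Preorder J] (xj : J → X) (x : X) : Prop :=
  ∃ FF : Set (Set X), FF.Nonempty ∧ (∀ F ∈ FF, F.Finite ∧ F.Nonempty) ∧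
    DirectedOn (fun A B : Set X => B ⊆ up A) FF ∧
    (∀ F ∈ FF, QELB xj F) ∧ (⋂ F ∈ FF, up F) ⊆ up {x}

lemma sle_refl' (x : X) : sle x x := subset_closure rfl

lemma closed_down {A : Set X} (hA : IsClosed A) {x y : X} (hx : x ∈ A) (h : sle y x) : y ∈ A :=
  closure_minimal (singleton_subset_iff.mpr hx) hA h

lemma open_up {U : Set X} (hU : IsOpen U) {x y : X} (hx : x ∈ U) (h : sle x y) : y ∈ U := by
  rcases mem_closure_iff.mp h U hU hx with ⟨z, hzU, hz⟩
  rcases hz with rfl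
  exact hzU

lemma mem_cut_closure_singleton (y : X) : y ∈ cut (closure ({y} : Set X)) :=
  fun u hu => hu y (subset_closure rfl)

lemma irred_closure_singleton (y : X) : Irred (closure ({y} : Set X)) := by
  refine ⟨⟨y, subset_closure rfl⟩, fun B C hB hC hsub => ?_⟩
  rcases hsub (subset_closure rfl) with hy | hy
  · exact Or.inl (closure_minimal (singleton_subset_iff.mpr hy) hB)
  · exact Or.inr (closure_minimal (singleton_subset_iff.mpr hy) hC)

lemma wayBelow_mem_up {F : Set X} {y : X} (h : wayBelow F {y}) : y ∈ up F := by
  rcases h (closure ({y} : Set X)) (irred_closure_singleton y)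
      ⟨y, rfl, mem_cut_closure_singleton y⟩ with ⟨a, haF, hay⟩
  rcases haF with ⟨b, hbF, hba⟩
  exact ⟨b, hbF, closure_minimal (singleton_subset_iff.mpr hay) isClosed_closure hba⟩

lemma chain_inter_finite {c : Set (Set X)} (hc : IsChain (· ⊆ ·) c) (hcne : c.Nonempty)
    {F : Set X} (hF : F.Finite) (h : ∀ A ∈ c, (A ∩ F).Nonempty) :
    (⋂₀ c ∩ F).Nonempty := by
  set T : Set (Set X) := (fun A => A ∩ F) '' c with hT
  have hTfin : T.Finite := hF.finite_subsets.subset (by rintro t ⟨A, _, rfl⟩; exact inter_subset_right)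
  have hTne : T.Nonempty := hcne.image _
  obtain ⟨m, hmT, hmin⟩ : ∃ m ∈ T, ∀ a' ∈ T, id a' ≤ id m → id m = id a' := by
    obtain ⟨m, hm⟩ := hTfin.exists_minimal hTne
    exact ⟨m, hm.1, fun a' ha' hle => le_antisymm (hm.2 ha' hle) hle⟩
  obtain ⟨A₀, hA₀c, rfl⟩ := hmT
  obtain ⟨e, heA₀, heF⟩ := h A₀ hA₀c
  refine ⟨e, ?_, heF⟩
  rw [mem_sInter]
  intro A hAc
  rcases hc.total hA₀c hAc with hsub | hsub
  · exact hsub heA₀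
  · have heq := hmin (A ∩ F) ⟨A, hAc, rfl⟩ (inter_subset_inter_left F hsub)
    simp only [id_eq] at heq
    have hmem : e ∈ A ∩ F := heq ▸ (⟨heA₀, heF⟩ : e ∈ A₀ ∩ F)
    exact hmem.1

/-- In an SI₂-quasicontinuous space, `U` is weakly irreducibly open iff every point
of `U` is above some finite set `F ≪_r x` with `↑F ⊆ U`. -/
theorem stmt14 [T0Space X] (hX : SI2Quasicontinuous X) (U : Set X) :
    WIOpen U ↔
      ∀ x ∈ U, ∃ F : Set X, F.Finite ∧ F.Nonempty ∧ wayBelow F {x} ∧ up F ⊆ U := by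
  constructor
  · rintro ⟨hUopen, hUwi⟩ x hxU
    by_contra hcon
    push_neg at hcon
    obtain ⟨⟨hwne, hwdir⟩, hupx, _⟩ := hX x
    -- each F in wfam x has a point outside U
    have hdiff : ∀ F ∈ wfam x, (F \ U).Nonempty := by
      intro F hF
      rcases hF with ⟨hFfin, hFne, hFwb⟩
      by_contra hemp
      rw [Set.not_nonempty_iff_eq_empty, diff_eq_empty] at hemp
      have hupsub : up F ⊆ U := by
        rintro y ⟨a, haF, hay⟩
        exact open_up hUopen (hemp haF) hay
      exact hcon F hFfin hFne hFwb hupsub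
    set S : Set (Set X) :=
      {A | IsClosed A ∧ A ⊆ Uᶜ ∧ ∀ F ∈ wfam x, (A ∩ (F \ U)).Nonempty} with hS
    have hUc : Uᶜ ∈ S := by
      refine ⟨hUopen.isClosed_compl, Subset.rfl, fun F hF => ?_⟩
      rcases hdiff F hF with ⟨e, heF, heU⟩
      exact ⟨e, heU, heF, heU⟩
    obtain ⟨A, -, hAS, hAmin⟩ : ∃ A, A ⊆ Uᶜ ∧ Minimal (· ∈ S) A := by
      refine zorn_superset_nonempty S (fun c hcS hc hcne => ?_) Uᶜ hUc
      refine ⟨⋂₀ c, ⟨isClosed_sInter fun A hA => (hcS hA).1,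
        (sInter_subset_of_mem hcne.some_mem).trans (hcS hcne.some_mem).2.1,
        fun F hF => ?_⟩, fun s hs => sInter_subset_of_mem hs⟩
      exact chain_inter_finite hc hcne ((hF.1.diff)) (fun B hB => (hcS hB).2.2 F hF)
    obtain ⟨hAcl, hAU, hAmeets⟩ := hAS
    -- A is irreducible
    have hAne : A.Nonempty := by
      rcases hwne with ⟨F₀, hF₀⟩
      rcases hAmeets F₀ hF₀ with ⟨e, heA, -⟩
      exact ⟨e, heA⟩
    have hAirr : Irred A := by
      refine ⟨hAne, fun B C hB hC hsub => ?_⟩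
      by_contra hbc
      push_neg at hbc
      obtain ⟨hnB, hnC⟩ := hbc
      -- A ∩ B misses some F₁ \ U
      have hmiss : ∀ D : Set X, IsClosed D → ¬ A ⊆ D →
          ∃ F ∈ wfam x, (A ∩ D) ∩ (F \ U) = ∅ := by
        intro D hD hnD
        by_contra hall
        push_neg at hall
        have hmem : A ∩ D ∈ S := by
          refine ⟨hAcl.inter hD, inter_subset_left.trans hAU, fun F hF => ?_⟩
          exact hall F hF
        have := hAmin hmem inter_subset_left
        exact hnD fun a haA => (this haA).2
      obtain ⟨F₁, hF₁, hmB⟩ := hmiss B hB hnB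
      obtain ⟨F₂, hF₂, hmC⟩ := hmiss C hC hnC
      obtain ⟨G, hG, hGF₁, hGF₂⟩ := hwdir F₁ hF₁ F₂ hF₂
      rcases hAmeets G hG with ⟨a, haA, haG, haU⟩
      rcases hsub haA with haB | haC
      · rcases hGF₁ haG with ⟨f, hfF₁, hfa⟩
        have hfA : f ∈ A := closed_down hAcl haA hfa
        have hfB : f ∈ B := closed_down hB haB hfa
        have hfU : f ∉ U := fun h => haU (open_up hUopen h hfa)
        have hmem : f ∈ (A ∩ B) ∩ (F₁ \ U) := ⟨⟨hfA, hfB⟩, hfF₁, hfU⟩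
        rw [hmB] at hmem
        exact hmem
      · rcases hGF₂ haG with ⟨f, hfF₂, hfa⟩
        have hfA : f ∈ A := closed_down hAcl haA hfa
        have hfC : f ∈ C := closed_down hC haC hfa
        have hfU : f ∉ U := fun h => haU (open_up hUopen h hfa)
        have hmem : f ∈ (A ∩ C) ∩ (F₂ \ U) := ⟨⟨hfA, hfC⟩, hfF₂, hfU⟩
        rw [hmC] at hmem
        exact hmem
    -- x ∈ cut A
    have hxcut : x ∈ cut A := by
      intro u hu
      have humem : u ∈ ⋂ F ∈ wfam x, up F := by
        rw [mem_iInter₂]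
        intro F hF
        rcases hAmeets F hF with ⟨e, heA, heF, -⟩
        exact ⟨e, heF, hu e heA⟩
      rw [← hupx] at humem
      rcases humem with ⟨a, ha, hau⟩
      rcases ha with rfl
      exact hau
    rcases hUwi A hAirr ⟨x, hxcut, hxU⟩ with ⟨a, haA, haU⟩
    exact hAU haA haU
  · intro h
    constructor
    · rw [isOpen_iff_forall_mem_open]
      intro x hxU
      obtain ⟨F, hFfin, hFne, hFwb, hFsub⟩ := h x hxU
      refine ⟨{y : X | wayBelow F {y}}, fun y hy => hFsub (wayBelow_mem_up hy),
        (hX x).2.2 F hFfin hFne, hFwb⟩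
    · intro E hE hcutE
      rcases hcutE with ⟨z, hzc, hzU⟩
      obtain ⟨F, hFfin, hFne, hFwb, hFsub⟩ := h z hzU
      rcases hFwb E hE ⟨z, rfl, hzc⟩ with ⟨a, haF, haE⟩
      exact ⟨a, haE, hFsub haF⟩
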